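/- For every permutation σ of {1,2} and every integer n ≥ 1, F_σ(n) ∩ F(1) = F_σ(1). -/

import Mathlib

/-!
Let `Pᵢ`, `Qⱼ` be the projections of the two decompositions and `T = Σᵢ Pᵢ Q_{σ i}`.
Each `Pᵢ` acts by a scalar on every `Vₖ`, hence preserves every `F_σ(n)`, and likewise each `Qⱼ`;
with this one checks on generators that `1 - T` maps `F_σ(n+1)` into `F_σ(n)`. On the other hand
`T` kills `G = Σ_{σ i ≠ j} Vᵢ ∩ Wⱼ`, so `1 - T` fixes `G` and induction gives `F_σ(n) ∩ G = 0`.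
Since `F(1) = F_σ(1) + G` and `F_σ(1) ⊆ F_σ(n)`, the modular law finishes the proof.
-/

open Submodule

/-- The increasing sequence of subspaces `F(n)`:
`F(0) = ⊥`, `F(n+1) = Σ_{i,j} (F(n) + Vᵢ) ⊓ (F(n) + Wⱼ)`. -/
noncomputable def Fseq {K E : Type*} [Field K] [AddCommGroup E] [Module K E]
    (V W : Fin 2 → Submodule K E) : ℕ → Submodule K E
  | 0 => ⊥
  | n + 1 => ⨆ i : Fin 2, ⨆ j : Fin 2, (Fseq V W n ⊔ V i) ⊓ (Fseq V W n ⊔ W j)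

/-- For a permutation `σ` of `{1,2}`, the increasing sequence of subspaces `F_σ(n)`:
`F_σ(0) = ⊥`, `F_σ(n+1) = Σ_i (F_σ(n) + Vᵢ) ⊓ (F_σ(n) + W_{σ(i)})`. -/
noncomputable def Fsig {K E : Type*} [Field K] [AddCommGroup E] [Module K E]
    (V W : Fin 2 → Submodule K E) (σ : Equiv.Perm (Fin 2)) : ℕ → Submodule K E
  | 0 => ⊥
  | n + 1 => ⨆ i : Fin 2, (Fsig V W σ n ⊔ V i) ⊓ (Fsig V W σ n ⊔ W (σ i))

theorem iSup₂_eq_iSup_apply_sup_iSup_ne {α ι κ : Type*} [CompleteLattice α]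
    (f : ι → κ → α) (σ : ι → κ) :
    ⨆ i, ⨆ j, f i j = (⨆ i, f i (σ i)) ⊔ ⨆ i, ⨆ j, ⨆ _ : σ i ≠ j, f i j := by
  refine le_antisymm (iSup₂_le fun i j => ?_)
    (sup_le (iSup_le fun i => le_iSup₂ (f := f) i (σ i))
      (iSup₂_le fun i j => iSup_le fun _ => le_iSup₂ (f := f) i j))
  by_cases h : σ i = j
  · subst h
    exact le_sup_of_le_left (le_iSup (fun i => f i (σ i)) i)
  · exact le_sup_of_le_right (le_iSup₂_of_le i j (le_iSup_of_le h le_rfl))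

theorem inf_eq_bot_of_shift {R M : Type*} [Semiring R] [AddCommMonoid M] [Module R M]
    {F : ℕ → Submodule R M} (hF : F 0 = ⊥) {G : Submodule R M} (S : M → M)
    (hS : ∀ n, ∀ x ∈ F (n + 1), S x ∈ F n) (hG : ∀ x ∈ G, S x = x) (n : ℕ) :
    F n ⊓ G = ⊥ := by
  induction n with
  | zero => rw [hF, bot_inf_eq]
  | succ n ih =>
    refine eq_bot_iff.mpr fun x ⟨hxF, hxG⟩ => ?_
    rw [← ih, ← hG x hxG]
    exact ⟨hS n x hxF, (hG x hxG).symm ▸ hxG⟩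

theorem exists_projections_of_isCompl {R M : Type*} [Ring R] [AddCommGroup M] [Module R M]
    {V : Fin 2 → Submodule R M} (hV : IsCompl (V 0) (V 1)) :
    ∃ P : Fin 2 → Module.End R M, ∀ k l, ∀ v ∈ V l, P k v = if k = l then v else 0 := by
  refine ⟨![(V 0).projection (V 1) hV, (V 1).projection (V 0) hV.symm], ?_⟩
  simp only [Fin.forall_fin_two]
  refine ⟨⟨?_, ?_⟩, ?_, ?_⟩ <;> intro v hv <;>
    simp [projection_apply_of_mem_left, projection_apply_of_mem_right, hv]

section Fsig

variable {K E : Type*} [Field K] [AddCommGroup E] [Module K E]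
  (V W : Fin 2 → Submodule K E) (σ : Equiv.Perm (Fin 2))

theorem Fsig_succ (n : ℕ) :
    Fsig V W σ (n + 1) = ⨆ i, (Fsig V W σ n ⊔ V i) ⊓ (Fsig V W σ n ⊔ W (σ i)) := rfl

theorem Fsig_one : Fsig V W σ 1 = ⨆ i, V i ⊓ W (σ i) := by
  simp only [Fsig, bot_sup_eq]

theorem Fseq_one : Fseq V W 1 = ⨆ i, ⨆ j, V i ⊓ W j := by
  simp only [Fseq, bot_sup_eq]

theorem monotone_Fsig : Monotone (Fsig V W σ) := by
  refine monotone_nat_of_le_succ fun n => ?_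
  induction n with
  | zero => exact bot_le
  | succ n ih =>
    exact iSup_mono fun i => inf_le_inf (sup_le_sup_right ih _) (sup_le_sup_right ih _)

theorem Fsig_swap : Fsig W V σ⁻¹ = Fsig V W σ := by
  funext n
  induction n with
  | zero => rfl
  | succ n ih =>
    rw [Fsig_succ, Fsig_succ, ih, ← σ.iSup_comp]
    simp [inf_comm]

variable {V W σ}

theorem apply_mem_Fsig_of_eigen_left {R : Module.End K E}
    (hR : ∀ i, ∃ c : K, ∀ v ∈ V i, R v = c • v) (n : ℕ) :
    ∀ x ∈ Fsig V W σ n, R x ∈ Fsig V W σ n := by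
  induction n with
  | zero => simp [Fsig]
  | succ n ih =>
    intro x hx
    refine iSup_induction _ (motive := fun y => R y ∈ Fsig V W σ (n + 1)) hx ?_ (by simp)
      fun _ _ => by simpa only [map_add] using add_mem
    intro i y hy
    have hyF : y ∈ Fsig V W σ (n + 1) :=
      le_iSup (fun i => (Fsig V W σ n ⊔ V i) ⊓ (Fsig V W σ n ⊔ W (σ i))) i hy
    obtain ⟨f, hf, v, hv, rfl⟩ := mem_sup.mp hy.1
    obtain ⟨c, hc⟩ := hR i
    have hfF : f ∈ Fsig V W σ (n + 1) := monotone_Fsig V W σ n.le_succ hf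
    have hvF : v ∈ Fsig V W σ (n + 1) := by simpa using sub_mem hyF hfF
    rw [map_add, hc v hv]
    exact add_mem (monotone_Fsig V W σ n.le_succ (ih f hf)) (smul_mem _ c hvF)

theorem apply_mem_Fsig_of_eigen_right {R : Module.End K E}
    (hR : ∀ j, ∃ c : K, ∀ w ∈ W j, R w = c • w) (n : ℕ) :
    ∀ x ∈ Fsig V W σ n, R x ∈ Fsig V W σ n := by
  rw [← Fsig_swap]
  exact apply_mem_Fsig_of_eigen_left hR n

variable {P Q : Fin 2 → Module.End K E}
  (hP : ∀ k l, ∀ v ∈ V l, P k v = if k = l then v else 0)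
  (hQ : ∀ k l, ∀ w ∈ W l, Q k w = if k = l then w else 0)
include hP hQ

theorem sub_mem_Fsig_of_mem_succ {n : ℕ} {x : E} (hx : x ∈ Fsig V W σ (n + 1)) :
    x - (∑ k, P k ∘ₗ Q (σ k)) x ∈ Fsig V W σ n := by
  have eigen {A : Fin 2 → Submodule K E} {R : Fin 2 → Module.End K E}
      (hR : ∀ k l, ∀ v ∈ A l, R k v = if k = l then v else 0) (k l : Fin 2) :
      ∃ c : K, ∀ v ∈ A l, R k v = c • v :=
    ⟨if k = l then 1 else 0, fun v hv => by rw [hR k l v hv]; split_ifs <;> simp⟩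
  have hPF (k : Fin 2) {y : E} (hy : y ∈ Fsig V W σ n) : P k y ∈ Fsig V W σ n :=
    apply_mem_Fsig_of_eigen_left (eigen hP k) n y hy
  have hTF {y : E} (hy : y ∈ Fsig V W σ n) : (∑ k, P k ∘ₗ Q (σ k)) y ∈ Fsig V W σ n := by
    rw [LinearMap.sum_apply]
    exact sum_mem fun k _ => hPF k (apply_mem_Fsig_of_eigen_right (eigen hQ (σ k)) n _ hy)
  refine iSup_induction _ (motive := fun y => y - (∑ k, P k ∘ₗ Q (σ k)) y ∈ Fsig V W σ n) hx
    ?_ (by simp) fun a b ha hb => by simpa only [map_add, add_sub_add_comm] using add_mem ha hb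
  rintro i y ⟨hyV, hyW⟩
  obtain ⟨f, hf, v, hv, hfv⟩ := mem_sup.mp hyV
  obtain ⟨g, hg, w, hw, rfl⟩ := mem_sup.mp hyW
  have hTw : (∑ k, P k ∘ₗ Q (σ k)) w = P i w := by
    simp only [LinearMap.sum_apply, LinearMap.comp_apply, hQ _ _ w hw, σ.injective.eq_iff,
      apply_ite, map_zero, Finset.sum_ite_eq', Finset.mem_univ, if_true]
  have hPv : P i v = v := by simpa using hP i i v hv
  -- `w ≡ v` modulo `F_σ(n)`, and `P i` fixes `v`
  have key : g + w - (∑ k, P k ∘ₗ Q (σ k)) (g + w) =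
      (g - (∑ k, P k ∘ₗ Q (σ k)) g) + ((f - g) - P i (f - g)) := by
    rw [map_add, hTw, show w = f + v - g by rw [hfv]; abel, map_sub, map_add, hPv, map_sub]
    abel
  rw [key]
  exact add_mem (sub_mem hg (hTF hg)) (sub_mem (sub_mem hf hg) (hPF i (sub_mem hf hg)))

theorem iSup_ne_le_ker :
    ⨆ i, ⨆ j, ⨆ _ : σ i ≠ j, V i ⊓ W j ≤ LinearMap.ker (∑ k, P k ∘ₗ Q (σ k)) := by
  refine iSup₂_le fun i j => iSup_le fun hij x ⟨hxV, hxW⟩ => ?_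
  rw [LinearMap.mem_ker, LinearMap.sum_apply]
  refine Finset.sum_eq_zero fun k _ => ?_
  rw [LinearMap.comp_apply, hQ _ j x hxW]
  split_ifs with h
  · rw [hP k i x hxV, if_neg (by rintro rfl; exact hij h)]
  · exact map_zero _

end Fsig

theorem stmt8_general {K E : Type*} [Field K] [AddCommGroup E] [Module K E]
    (V W : Fin 2 → Submodule K E)
    (hV : IsCompl (V 0) (V 1)) (hW : IsCompl (W 0) (W 1)) :
    ∀ (σ : Equiv.Perm (Fin 2)) (n : ℕ), 1 ≤ n →
      Fsig V W σ n ⊓ Fseq V W 1 = Fsig V W σ 1 := by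
  intro σ n hn
  obtain ⟨P, hP⟩ := exists_projections_of_isCompl hV
  obtain ⟨Q, hQ⟩ := exists_projections_of_isCompl hW
  set G := ⨆ i, ⨆ j, ⨆ _ : σ i ≠ j, V i ⊓ W j
  have hdisj : Fsig V W σ n ⊓ G = ⊥ :=
    inf_eq_bot_of_shift (F := Fsig V W σ) rfl (fun x => x - (∑ k, P k ∘ₗ Q (σ k)) x)
      (fun _ _ hx => sub_mem_Fsig_of_mem_succ hP hQ hx)
      (fun x hx => by rw [LinearMap.mem_ker.mp (iSup_ne_le_ker hP hQ hx), sub_zero]) n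
  calc Fsig V W σ n ⊓ Fseq V W 1 = (Fsig V W σ 1 ⊔ G) ⊓ Fsig V W σ n := by
        rw [Fseq_one, Fsig_one, iSup₂_eq_iSup_apply_sup_iSup_ne _ σ, inf_comm]
    _ = Fsig V W σ 1 := by
        rw [sup_inf_assoc_of_le _ (monotone_Fsig V W σ hn), inf_comm, hdisj, sup_bot_eq]

/-- For every permutation `σ` of `{1,2}` and every `n ≥ 1`, `F_σ(n) ∩ F(1) = F_σ(1)`. -/
theorem stmt8 {K E : Type*} [Field K] [AddCommGroup E] [Module K E]
    [FiniteDimensional K E] (hchar : (2 : K) ≠ 0)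
    (V W : Fin 2 → Submodule K E)
    (hV : IsCompl (V 0) (V 1)) (hW : IsCompl (W 0) (W 1)) :
    ∀ (σ : Equiv.Perm (Fin 2)) (n : ℕ), 1 ≤ n →
      Fsig V W σ n ⊓ Fseq V W 1 = Fsig V W σ 1 :=
  stmt8_general V W hV hW
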